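/- arXiv:1804.05403 — 2 statements merged into one kernel-verified Lean document; each statement's English description precedes it below -/
import Mathlib

section
/- Let I = diag(λ₁,λ₂,λ₃) with λᵢ > 0 and suppose a* ∈ ℝ³ is an eigenvector of I with I a* = λ* a*, a* ≠ 0. If a ∈ ℝ³ satisfies a* × (I a) + a × (I a*) = 0, then a ∈ N(λ* − I), i.e., I a = λ* a. -/
/-!
Since `I a* = λ* a*`, the hypothesis says `a* × (I a - λ* a) = 0`, so `b := I a - λ* a` is a
multiple of `a*` and therefore itself lies in the `λ*`-eigenspace of `I`. For a diagonal `I` this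
eigenspace meets the range of `I - λ*` only in `0`: componentwise, `(λⱼ - λ*)² aⱼ = 0` forces
`(λⱼ - λ*) aⱼ = 0`. Hence `b = 0`.
-/

open Matrix

theorem exists_smul_eq_of_cross_eq_zero {F : Type*} [Field F] {u v : Fin 3 → F} (hu : u ≠ 0)
    (h : u ⨯₃ v = 0) : ∃ c : F, c • u = v := by
  by_contra! hne
  exact crossProduct_ne_zero_iff_linearIndependent.mpr ((LinearIndependent.pair_iff' hu).mpr hne) h

theorem Matrix.diagonal_mulVec_eq_smul_of_sub_mem_eigenspace {n R : Type*} [Fintype n]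
    [DecidableEq n] [CommRing R] [IsReduced R] {d : n → R} {μ : R} {a : n → R}
    (h : diagonal d *ᵥ (diagonal d *ᵥ a - μ • a) = μ • (diagonal d *ᵥ a - μ • a)) :
    diagonal d *ᵥ a = μ • a := by
  funext j
  have hj : ((d j - μ) * a j) ^ 2 = 0 := by
    have := congrFun h j
    simp only [mulVec_diagonal, Pi.sub_apply, Pi.smul_apply, smul_eq_mul] at this
    linear_combination a j * this
  simp only [mulVec_diagonal, Pi.smul_apply, smul_eq_mul]
  linear_combination pow_eq_zero_iff two_ne_zero |>.mp hj

theorem stmt4_general (lam : Fin 3 → ℝ)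
    (lamstar : ℝ) (astar : Fin 3 → ℝ) (hastar : astar ≠ 0)
    (heig : (Matrix.diagonal lam).mulVec astar = lamstar • astar)
    (a : Fin 3 → ℝ)
    (h : crossProduct astar ((Matrix.diagonal lam).mulVec a)
        + crossProduct a ((Matrix.diagonal lam).mulVec astar) = 0) :
    (Matrix.diagonal lam).mulVec a = lamstar • a := by
  have hcross : astar ⨯₃ (diagonal lam *ᵥ a - lamstar • a) = 0 := by
    rw [← h, heig, map_sub, map_smul, map_smul, ← cross_anticomm a astar,
      smul_neg, sub_neg_eq_add]
  obtain ⟨c, hc⟩ := exists_smul_eq_of_cross_eq_zero hastar hcross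
  apply diagonal_mulVec_eq_smul_of_sub_mem_eigenspace
  rw [← hc, mulVec_smul, heig, smul_comm]

/-- If `I a* = λ* a*` with `a* ≠ 0` and `a* × (I a) + a × (I a*) = 0`,
then `I a = λ* a`. -/
theorem stmt4 (lam : Fin 3 → ℝ) (hlam : ∀ i, 0 < lam i)
    (lamstar : ℝ) (astar : Fin 3 → ℝ) (hastar : astar ≠ 0)
    (heig : (Matrix.diagonal lam).mulVec astar = lamstar • astar)
    (a : Fin 3 → ℝ)
    (h : crossProduct astar ((Matrix.diagonal lam).mulVec a)
        + crossProduct a ((Matrix.diagonal lam).mulVec astar) = 0) :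
    (Matrix.diagonal lam).mulVec a = lamstar • a :=
  stmt4_general lam lamstar astar hastar heig a h
end

section
/- Let z ∈ ℂ and a ∈ ℂ³, let I = diag(λ₁,λ₂,λ₃) with real λᵢ > 0, and let a* ∈ ℝ³ with I a* = λ* a*, a* ≠ 0. If z I a + a* × I a + (a − ω) × I a* = 0 for some ω ∈ ℂ³, then Re[ z (I a | ω)_{ℂ³} ] = (Re z) · λ*⁻¹ (I a | (λ* − I) ā)_{ℂ³}, where (·|·)_{ℂ³} is the Hermitian inner product. -/
/-!
Write `b = I a`, `c = a*` and `u = a - ω`, so that the hypothesis reads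
`z b + c × b + λ* (u × c) = 0`. Dot it with `ū`, and dot its complex conjugate with `b`.
The terms `λ* (u × c)·ū` and `b·(c × b̄)` are triple products `w·(c × w̄)` with `c` real, hence
purely imaginary, while the two remaining cross terms `(c × b)·ū` and `b·(ū × c)` agree. Taking
real parts gives `λ* Re(z (b|u)) = Re z |b|²`; as `(I a|a)` is real and `λ* > 0`, this is the claim.
-/

open Matrix Complex

lemma star_cross {R : Type*} [CommRing R] [StarRing R] (u v : Fin 3 → R) :
    star (u ⨯₃ v) = star u ⨯₃ star v := by
  ext i
  fin_cases i <;> simp [cross_apply, mul_comm]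

lemma re_dotProduct_cross_star_self {c : Fin 3 → ℂ} (hc : star c = c) (u : Fin 3 → ℂ) :
    (u ⬝ᵥ c ⨯₃ star u).re = 0 := by
  have hconj : star (u ⬝ᵥ c ⨯₃ star u) = -(u ⬝ᵥ c ⨯₃ star u) := by
    rw [← star_dotProduct_star, star_cross, star_star, hc, dotProduct_comm,
      triple_product_permutation, triple_product_permutation c, ← cross_anticomm c (star u),
      dotProduct_neg]
  have := congrArg re hconj
  simp only [star_def, conj_re, neg_re] at this
  linarith

open scoped ComplexOrder in
lemma im_dotProduct_star_self {n : Type*} [Fintype n] (b : n → ℂ) : (b ⬝ᵥ star b).im = 0 := by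
  rw [dotProduct_comm]
  exact (nonneg_iff.mp (dotProduct_star_self_nonneg b)).2.symm

lemma im_diagonal_mulVec_dotProduct_star {n : Type*} [Fintype n] [DecidableEq n]
    (d : n → ℝ) (a : n → ℂ) : ((diagonal fun i => (d i : ℂ)) *ᵥ a ⬝ᵥ star a).im = 0 := by
  simp only [dotProduct, mulVec_diagonal, Pi.star_apply, star_def, im_sum, mul_im, ofReal_re,
    ofReal_im, conj_re, conj_im, mul_re]
  exact Finset.sum_eq_zero fun i _ => by ring

theorem mul_re_mul_dotProduct_star_eq_of_smul_add_cross_add_smul_cross {z : ℂ} {μ : ℝ}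
    {b c u : Fin 3 → ℂ} (hc : star c = c) (h : z • b + c ⨯₃ b + (μ : ℂ) • u ⨯₃ c = 0) :
    μ * (z * (b ⬝ᵥ star u)).re = z.re * (b ⬝ᵥ star b).re := by
  have hu := congrArg (· ⬝ᵥ star u) h
  have hb := congrArg (fun w => b ⬝ᵥ star w) h
  simp only [add_dotProduct, smul_dotProduct, zero_dotProduct, smul_eq_mul] at hu
  simp only [star_add, star_smul, star_cross, hc, star_zero, dotProduct_add, dotProduct_smul,
    dotProduct_zero, smul_eq_mul, star_def, conj_ofReal] at hb
  have hcross : b ⬝ᵥ star u ⨯₃ c = c ⨯₃ b ⬝ᵥ star u := by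
    rw [triple_product_permutation, dotProduct_comm]
  have hre_u : (u ⨯₃ c ⬝ᵥ star u).re = 0 := by
    rw [dotProduct_comm, triple_product_permutation]
    exact re_dotProduct_cross_star_self hc u
  have hre_b := re_dotProduct_cross_star_self hc b
  have hbb := im_dotProduct_star_self b
  rw [hcross] at hb
  have hu' := congrArg re hu
  have hb' := congrArg re hb
  simp only [add_re, mul_re, ofReal_re, ofReal_im, conj_re, conj_im, zero_re, hre_u, hre_b,
    hbb] at hu' hb'
  rw [mul_re]
  linear_combination μ * hu' - hb'

lemma exists_diagonal_eq_of_mulVec_eq_smul {n R : Type*} [Fintype n] [DecidableEq n] [CommRing R]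
    [NoZeroDivisors R] {d v : n → R} {μ : R} (hv : v ≠ 0) (h : diagonal d *ᵥ v = μ • v) :
    ∃ j, d j = μ := by
  obtain ⟨j, hj⟩ := Function.ne_iff.mp hv
  exact ⟨j, mul_right_cancel₀ hj (by simpa [mulVec_diagonal] using congrFun h j)⟩

/-- Key spectral identity: if `z I a + a* × I a + (a − ω) × I a* = 0` in `ℂ³`, with
`I = diag(λ)` positive, `I a* = λ* a*`, `a* ≠ 0` real, then
`Re[z (I a|ω)] = (Re z) λ*⁻¹ Re (I a|(λ* − I)a)` with the Hermitian inner product. -/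
theorem stmt11 (lam : Fin 3 → ℝ) (hlam : ∀ i, 0 < lam i)
    (lamstar : ℝ) (astar : Fin 3 → ℝ) (hastar : astar ≠ 0)
    (heig : (Matrix.diagonal lam).mulVec astar = lamstar • astar)
    (z : ℂ) (a ω : Fin 3 → ℂ)
    (heq : z • (Matrix.diagonal fun i => (lam i : ℂ)).mulVec a
        + (fun i => (astar i : ℂ)) ⨯₃ ((Matrix.diagonal fun i => (lam i : ℂ)).mulVec a)
        + (a - ω) ⨯₃ ((Matrix.diagonal fun i => (lam i : ℂ)).mulVec fun i => (astar i : ℂ))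
        = 0) :
    (z * ((Matrix.diagonal fun i => (lam i : ℂ)).mulVec a ⬝ᵥ star ω)).re
      = z.re * lamstar⁻¹ *
        ((Matrix.diagonal fun i => (lam i : ℂ)).mulVec a ⬝ᵥ
          star ((lamstar : ℂ) • a - (Matrix.diagonal fun i => (lam i : ℂ)).mulVec a)).re := by
  set b := (diagonal fun i => (lam i : ℂ)) *ᵥ a
  set c : Fin 3 → ℂ := fun i => (astar i : ℂ)
  obtain ⟨j, hj⟩ := exists_diagonal_eq_of_mulVec_eq_smul hastar heig
  have hlamstar : lamstar ≠ 0 := hj ▸ (hlam j).ne'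
  have hc : star c = c := funext fun i => conj_ofReal (astar i)
  have hIc : (diagonal fun i => (lam i : ℂ)) *ᵥ c = (lamstar : ℂ) • c := by
    ext i
    simpa [c, mulVec_diagonal] using congr(((↑) : ℝ → ℂ) $(congrFun heig i))
  rw [hIc, map_smul] at heq
  have key := mul_re_mul_dotProduct_star_eq_of_smul_add_cross_add_smul_cross hc heq
  have hreal := im_diagonal_mulVec_dotProduct_star lam a
  have hza : (z * (b ⬝ᵥ star a)).re = z.re * (b ⬝ᵥ star a).re := by simp [mul_re, b, hreal]
  have hlhs : (z * (b ⬝ᵥ star ω)).re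
      = z.re * (b ⬝ᵥ star a).re - (z * (b ⬝ᵥ star (a - ω))).re := by
    rw [star_sub, dotProduct_sub, mul_sub, sub_re, hza, sub_sub_cancel]
  have hrhs : (b ⬝ᵥ star ((lamstar : ℂ) • a - b)).re
      = lamstar * (b ⬝ᵥ star a).re - (b ⬝ᵥ star b).re := by
    simp [dotProduct_sub, dotProduct_smul]
  rw [hlhs, hrhs]
  field_simp
  linear_combination -key
end
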